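/- Let 0 < p1, p2 < ∞ and let {f_k : k ≥ 1} and f be measurable functions on ℝ^n × ℝ^m with lim_{k→∞} ‖f_k − f‖_{L^{(p1,p2),∞}} = 0. Then there is a strictly increasing sequence of indices (k_l) such that f_{k_l}(x,y) → f(x,y) as l → ∞ for almost every (x,y) ∈ ℝ^n × ℝ^m. -/

import Mathlib

open MeasureTheory ENNReal Filter Topology Set

noncomputable section

/-- `ℝ^n` with the Euclidean norm and Lebesgue measure. -/
abbrev Euc (n : ℕ) : Type := EuclideanSpace ℝ (Fin n)

/-- The weak `L^q` quasi-norm `sup_{λ>0} λ·μ{x : |h x| > λ}^{1/q}`. -/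
def weakNorm {α : Type*} [MeasurableSpace α] (μ : Measure α) (q : ℝ) (h : α → ℝ) : ℝ≥0∞ :=
  ⨆ (l : ℝ) (_ : 0 < l), ENNReal.ofReal l * μ {x | l < |h x|} ^ (1 / q)

/-- The strong `L^q` norm `(∫ |h|^q)^{1/q}`. -/
def strongNorm {α : Type*} [MeasurableSpace α] (μ : Measure α) (q : ℝ) (h : α → ℝ) : ℝ≥0∞ :=
  (∫⁻ x, ENNReal.ofReal |h x| ^ q ∂μ) ^ (1 / q)

/-- The mixed norm `‖f‖_{L^{(p1,p2)}}` on `ℝ^n × ℝ^m` (inner exponent `p1` in `x`,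
outer exponent `p2` in `y`). -/
def mixedNorm {n m : ℕ} (p1 p2 : ℝ) (f : Euc n × Euc m → ℝ) : ℝ≥0∞ :=
  (∫⁻ y : Euc m, (∫⁻ x : Euc n, ENNReal.ofReal |f (x, y)| ^ p1) ^ (p2 / p1)) ^ (1 / p2)

/-- The mixed weak norm `‖f‖_{L^{(p1,p2),∞}} = sup_{λ>0} λ·‖χ_{{|f|>λ}}‖_{L^{(p1,p2)}}`. -/
def mixedWeakNorm {n m : ℕ} (p1 p2 : ℝ) (f : Euc n × Euc m → ℝ) : ℝ≥0∞ :=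
  ⨆ (l : ℝ) (_ : 0 < l), ENNReal.ofReal l *
    mixedNorm p1 p2 ({z | l < |f z|}.indicator fun _ => (1 : ℝ))

/-- The iterated weak norm `‖f‖_{L^{p2,∞}(L^{p1,∞})}`: the weak `L^{p2}` quasi-norm in `y`
of the weak `L^{p1}` quasi-norm in `x`. -/
def iteratedWeakNorm {n m : ℕ} (p1 p2 : ℝ) (f : Euc n × Euc m → ℝ) : ℝ≥0∞ :=
  ⨆ (l : ℝ) (_ : 0 < l), ENNReal.ofReal l *
    volume {y : Euc m | ENNReal.ofReal l < weakNorm volume p1 fun x => f (x, y)} ^ (1 / p2)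

/-- The mixed weak norm for `[0,∞]`-valued functions. -/
def mixedWeakNormE {n m : ℕ} (p1 p2 : ℝ) (f : Euc n × Euc m → ℝ≥0∞) : ℝ≥0∞ :=
  ⨆ (l : ℝ) (_ : 0 < l), ENNReal.ofReal l *
    mixedNorm p1 p2 ({z | ENNReal.ofReal l < f z}.indicator fun _ => (1 : ℝ))

lemma mixedNorm_indicator {n m : ℕ} {p1 p2 : ℝ} (hp1 : 0 < p1)
    {S : Set (Euc n × Euc m)} (hS : MeasurableSet S) :
    mixedNorm p1 p2 (S.indicator fun _ => (1:ℝ)) =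
      (∫⁻ y : Euc m, (volume ((fun x => (x, y)) ⁻¹' S)) ^ (p2 / p1)) ^ (1 / p2) := by
  unfold mixedNorm
  congr 1
  refine lintegral_congr fun y => ?_
  congr 1
  have h : ∀ x : Euc n, ENNReal.ofReal |S.indicator (fun _ => (1:ℝ)) (x, y)| ^ p1
      = ((fun x => (x, y)) ⁻¹' S).indicator (fun _ => (1:ℝ≥0∞)) x := by
    intro x
    by_cases hx : (x, y) ∈ S
    · simp [Set.indicator_of_mem, hx, Set.mem_preimage]
    · simp [Set.indicator_of_notMem, hx, Set.mem_preimage,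
        ENNReal.zero_rpow_of_pos hp1]
  simp_rw [h]
  exact lintegral_indicator_one (measurable_prodMk_right hS)


/-- If `f_k → f` in the mixed weak norm `L^{(p1,p2),∞}`, then some subsequence
`f_{k_l}` converges to `f` almost everywhere on `ℝ^n × ℝ^m`. -/
theorem stmt8 (n m : ℕ) (p1 p2 : ℝ) (hp1 : 0 < p1) (hp2 : 0 < p2)
    (f : ℕ → Euc n × Euc m → ℝ) (g : Euc n × Euc m → ℝ)
    (hmeas : ∀ k, Measurable (f k)) (hg : Measurable g)
    (hconv : Tendsto (fun k => mixedWeakNorm p1 p2 (fun z => f k z - g z)) atTop (𝓝 0)) :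
    ∃ φ : ℕ → ℕ, StrictMono φ ∧
      ∀ᵐ z ∂(volume : Measure (Euc n × Euc m)),
        Tendsto (fun l => f (φ l) z) atTop (𝓝 (g z)) := by
  have hDmeas : ∀ k, Measurable (fun z => f k z - g z) := fun k => (hmeas k).sub hg
  set q : ℝ := p2 / p1 with hq
  have hq0 : 0 < q := div_pos hp2 hp1
  set lam : ℕ → ℝ := fun l => (1/2 : ℝ) ^ l with hlamdef
  have hlam : ∀ l, 0 < lam l := fun l => pow_pos (by norm_num) l
  set t : ℕ → ℝ≥0∞ := fun l => ENNReal.ofReal (lam l) with ht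
  have ht0 : ∀ l, t l ≠ 0 := fun l => (ENNReal.ofReal_pos.2 (hlam l)).ne'
  have htT : ∀ l, t l ≠ ∞ := fun l => ENNReal.ofReal_ne_top
  have hSmeas : ∀ k (l : ℝ), MeasurableSet {z : Euc n × Euc m | l < |f k z - g z|} :=
    fun k l => measurableSet_lt measurable_const (hDmeas k).abs
  set V : ℕ → ℕ → Euc m → ℝ≥0∞ := fun k l y =>
    volume ((fun x => (x, y)) ⁻¹' {z : Euc n × Euc m | lam l < |f k z - g z|}) with hV
  have hVmeas : ∀ k l, Measurable (V k l) := fun k l =>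
    measurable_measure_prodMk_right (hSmeas k (lam l))
  set W : ℕ → ℝ≥0∞ := fun k => mixedWeakNorm p1 p2 (fun z => f k z - g z) with hW
  have htq0 : ∀ l, t l ^ q ≠ 0 := fun l =>
    (ENNReal.rpow_pos (pos_iff_ne_zero.2 (ht0 l)) (htT l)).ne'
  have htqT : ∀ l, t l ^ q ≠ ∞ := fun l => ENNReal.rpow_ne_top_of_nonneg hq0.le (htT l)
  set C : ℕ → ℝ≥0∞ := fun l => (t l ^ q)⁻¹ * ((t l)⁻¹) ^ p2 with hC
  have hC0 : ∀ l, C l ≠ 0 := fun l => mul_ne_zero (ENNReal.inv_ne_zero.2 (htqT l))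
    (ENNReal.rpow_pos (ENNReal.inv_pos.2 (htT l)) (ENNReal.inv_ne_top.2 (ht0 l))).ne'
  have hCT : ∀ l, C l ≠ ∞ := fun l => ENNReal.mul_ne_top (ENNReal.inv_ne_top.2 (htq0 l))
    (ENNReal.rpow_ne_top_of_nonneg hp2.le (ENNReal.inv_ne_top.2 (ht0 l)))
  -- main quantitative bound
  have hBound : ∀ k l, volume {y | t l < V k l y} ≤ C l * W k ^ p2 := by
    intro k l
    have hA : t l * (∫⁻ y, V k l y ^ q) ^ (1/p2) ≤ W k := by
      have heq := mixedNorm_indicator (p2 := p2) hp1 (hSmeas k (lam l))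
      rw [hW]
      unfold mixedWeakNorm
      refine le_trans (le_of_eq ?_) (le_iSup₂ (lam l) (hlam l))
      rw [heq]
    set I : ℝ≥0∞ := ∫⁻ y, V k l y ^ q with hI
    have h1 : I ^ (1/p2) ≤ W k / t l :=
      (ENNReal.le_div_iff_mul_le (Or.inl (ht0 l)) (Or.inl (htT l))).2
        (by rw [mul_comm]; exact hA)
    have hIle : I ≤ (W k / t l) ^ p2 := by
      have : I = (I ^ (1/p2)) ^ p2 := by
        rw [← ENNReal.rpow_mul, one_div, inv_mul_cancel₀ hp2.ne', ENNReal.rpow_one]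
      rw [this]
      exact ENNReal.rpow_le_rpow h1 hp2.le
    have hcheb : t l ^ q * volume {y | t l < V k l y} ≤ I := by
      have hsub : {y | t l < V k l y} ⊆ {y | t l ^ q ≤ V k l y ^ q} := fun y hy =>
        ENNReal.rpow_le_rpow (le_of_lt hy) hq0.le
      calc t l ^ q * volume {y | t l < V k l y}
          ≤ t l ^ q * volume {y | t l ^ q ≤ V k l y ^ q} :=
            mul_le_mul_right (measure_mono hsub) _
        _ ≤ I := mul_meas_ge_le_lintegral₀ ((hVmeas k l).pow measurable_const).aemeasurable _
    have h2 : volume {y | t l < V k l y} ≤ I / t l ^ q :=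
      (ENNReal.le_div_iff_mul_le (Or.inl (htq0 l)) (Or.inl (htqT l))).2
        (by rw [mul_comm]; exact hcheb)
    calc volume {y | t l < V k l y} ≤ I / t l ^ q := h2
      _ ≤ (W k / t l) ^ p2 / t l ^ q := ENNReal.div_le_div_right hIle _
      _ = C l * W k ^ p2 := by
          rw [ENNReal.div_rpow_of_nonneg _ _ hp2.le, hC]
          simp only [div_eq_mul_inv, ENNReal.inv_rpow]
          ring
  -- eventual smallness
  have hstepC : ∀ l, ∀ᶠ k in atTop, volume {y | t l < V k l y} ≤ t l := by
    intro l
    have hWto : ∀ ε > (0:ℝ≥0∞), ∀ᶠ k in atTop, W k ≤ ε := ENNReal.tendsto_nhds_zero.1 hconv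
    have hε : (0:ℝ≥0∞) < (t l / C l) ^ (1/p2) :=
      ENNReal.rpow_pos (ENNReal.div_pos (ht0 l) (hCT l))
        (by
          exact (ENNReal.div_lt_top (htT l) (hC0 l)).ne)
    filter_upwards [hWto _ hε] with k hk
    calc volume {y | t l < V k l y} ≤ C l * W k ^ p2 := hBound k l
      _ ≤ C l * ((t l / C l) ^ (1/p2)) ^ p2 :=
          mul_le_mul_right (ENNReal.rpow_le_rpow hk hp2.le) _
      _ = C l * (t l / C l) := by rw [one_div, ENNReal.rpow_inv_rpow hp2.ne']
      _ = t l := ENNReal.mul_div_cancel (hC0 l) (hCT l)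
  obtain ⟨φ, hφmono, hφ⟩ := extraction_forall_of_eventually hstepC
  refine ⟨φ, hφmono, ?_⟩
  set S : ℕ → Set (Euc n × Euc m) := fun l => {z | lam l < |f (φ l) z - g z|} with hS
  set Bad : ℕ → Set (Euc m) := fun l => {y | t l < V (φ l) l y} with hBad
  have hBadmeas : ∀ l, MeasurableSet (Bad l) := fun l =>
    measurableSet_lt measurable_const (hVmeas (φ l) l)
  -- boxes
  have hbox : ∀ R : ℕ, ∀ l : ℕ,
      volume (S l ∩ (Metric.ball (0:Euc n) R ×ˢ Metric.ball (0:Euc m) R)) ≤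
        t l * (volume (Metric.ball (0:Euc n) (R:ℝ)) + volume (Metric.ball (0:Euc m) (R:ℝ))) := by
    intro R l
    set Bn := Metric.ball (0:Euc n) (R:ℝ) with hBn
    set Bm := Metric.ball (0:Euc m) (R:ℝ) with hBm
    have hmb : MeasurableSet (S l ∩ Bn ×ˢ Bm) :=
      (hSmeas (φ l) (lam l)).inter (measurableSet_ball.prod measurableSet_ball)
    rw [Measure.volume_eq_prod, Measure.prod_apply_symm hmb]
    have hpt : ∀ y : Euc m, volume ((fun x => (x, y)) ⁻¹' (S l ∩ Bn ×ˢ Bm)) ≤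
        (Bad l).indicator (fun _ => volume Bn) y + Bm.indicator (fun _ => t l) y := by
      intro y
      by_cases hy : y ∈ Bm
      · by_cases hyB : y ∈ Bad l
        · refine le_trans (measure_mono fun x hx => hx.2.1) ?_
          simp [Set.indicator_of_mem hyB]
        · have hVle : V (φ l) l y ≤ t l := not_lt.1 hyB
          refine le_trans (le_trans (measure_mono fun x hx => hx.1) hVle) ?_
          simp [Set.indicator_of_mem hy, Set.indicator_of_notMem hyB]
      · have hemp : (fun x => (x, y)) ⁻¹' (S l ∩ Bn ×ˢ Bm) = ∅ := by
          ext x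
          simp only [Set.mem_preimage, Set.mem_inter_iff, Set.mem_prod, Set.mem_empty_iff_false,
            iff_false, not_and]
          exact fun _ _ => hy
        simp [hemp]
    calc (∫⁻ y, volume ((fun x => (x, y)) ⁻¹' (S l ∩ Bn ×ˢ Bm))) ≤
        ∫⁻ y, ((Bad l).indicator (fun _ => volume Bn) y + Bm.indicator (fun _ => t l) y) :=
          lintegral_mono hpt
      _ = volume Bn * volume (Bad l) + t l * volume Bm := by
          rw [lintegral_add_left ((measurable_const.indicator (hBadmeas l))),
            lintegral_indicator_const (hBadmeas l), lintegral_indicator_const measurableSet_ball]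
      _ ≤ t l * volume Bn + t l * volume Bm := by
          refine add_le_add_left ?_ _
          rw [mul_comm]
          exact mul_le_mul_left (hφ l) _
      _ = t l * (volume Bn + volume Bm) := (mul_add _ _ _).symm
  -- Borel-Cantelli on each box
  have hsumT : (∑' l, t l) ≠ ∞ := by
    have heq : ∀ l : ℕ, t l = (ENNReal.ofReal (1/2)) ^ l := fun l => by
      rw [ht]; exact ENNReal.ofReal_pow (by norm_num) l
    rw [tsum_congr heq, ENNReal.tsum_geometric]
    refine ENNReal.inv_ne_top.2 ?_
    rw [ne_eq, tsub_eq_zero_iff_le]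
    exact not_le.2 (ENNReal.ofReal_lt_one.2 (by norm_num))
  have hlimsupR : ∀ R : ℕ,
      volume (limsup (fun l => S l ∩ (Metric.ball (0:Euc n) R ×ˢ Metric.ball (0:Euc m) R)) atTop) = 0 := by
    intro R
    apply measure_limsup_atTop_eq_zero
    refine ne_top_of_le_ne_top ?_ (ENNReal.tsum_le_tsum (fun l => hbox R l))
    rw [ENNReal.tsum_mul_right]
    exact ENNReal.mul_ne_top hsumT
      (ENNReal.add_ne_top.2 ⟨measure_ball_lt_top.ne, measure_ball_lt_top.ne⟩)
  have hlimsup : volume (limsup S atTop) = 0 := by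
    have hsub : limsup S atTop ⊆
        ⋃ R : ℕ, limsup (fun l => S l ∩ (Metric.ball (0:Euc n) R ×ˢ Metric.ball (0:Euc m) R)) atTop := by
      intro z hz
      obtain ⟨R, hR⟩ := exists_nat_gt (max ‖z.1‖ ‖z.2‖)
      refine Set.mem_iUnion.2 ⟨R, ?_⟩
      rw [mem_limsup_iff_frequently_mem] at hz ⊢
      refine hz.mono fun l hl => ⟨hl, ?_, ?_⟩
      · exact mem_ball_zero_iff.2 (lt_of_le_of_lt (le_max_left _ _) hR)
      · exact mem_ball_zero_iff.2 (lt_of_le_of_lt (le_max_right _ _) hR)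
    exact measure_mono_null hsub (measure_iUnion_null hlimsupR)
  have hae : ∀ᵐ z ∂(volume : Measure (Euc n × Euc m)), z ∉ limsup S atTop :=
    measure_eq_zero_iff_ae_notMem.1 hlimsup
  filter_upwards [hae] with z hz
  rw [mem_limsup_iff_frequently_mem, not_frequently] at hz
  have h1 : Tendsto (fun l => f (φ l) z - g z) atTop (𝓝 0) := by
    rw [tendsto_zero_iff_abs_tendsto_zero]
    refine squeeze_zero' (Eventually.of_forall fun l => abs_nonneg _)
      (hz.mono fun l hl => ?_) (tendsto_pow_atTop_nhds_zero_of_lt_one (r := (1/2:ℝ)) (by norm_num) (by norm_num))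
    exact not_lt.1 hl
  have h2 := h1.add_const (g z)
  rw [zero_add] at h2
  simpa using h2
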